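/- arXiv:2412.20811 — 5 statements merged into one kernel-verified Lean document; each statement's English description precedes it below -/
import Mathlib

section
/- Every 2-connected bipartite outerplanar graph G admits an orientation D with d⁺_D(v) ≤ min{3, d_G(v) − 1} for every vertex v; since G is bipartite, every such orientation is an AT-orientation, so G is 4-truncated degree-AT. -/
variable {V : Type*} [Fintype V] [DecidableEq V]

/-- Out-degree of `v` in the digraph (arc set) `D`. -/
def outDeg (D : Finset (V × V)) (v : V) : ℕ := (D.filter fun a => a.1 = v).card

/-- In-degree of `v` in the digraph (arc set) `D`. -/
def inDeg (D : Finset (V × V)) (v : V) : ℕ := (D.filter fun a => a.2 = v).card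

/-- An arc set is Eulerian if every vertex has equal in- and out-degree. -/
def IsEulerian (H : Finset (V × V)) : Prop := ∀ v, outDeg H v = inDeg H v

instance (H : Finset (V × V)) : Decidable (IsEulerian H) := by
  unfold IsEulerian; infer_instance

/-- The Eulerian subdigraphs of `D`. -/
def eulerianSubs (D : Finset (V × V)) : Finset (Finset (V × V)) :=
  D.powerset.filter IsEulerian

/-- `D` is an AT-orientation: the number of even Eulerian subdigraphs differs from
the number of odd ones. -/
def IsAT (D : Finset (V × V)) : Prop :=
  ((eulerianSubs D).filter fun H => Even H.card).card ≠
    ((eulerianSubs D).filter fun H => Odd H.card).card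

/-- `D` is an orientation of the graph `G`: every arc is an edge of `G`,
and each edge of `G` gets exactly one direction. -/
def IsOrientation (G : SimpleGraph V) (D : Finset (V × V)) : Prop :=
  (∀ a ∈ D, G.Adj a.1 a.2) ∧ ∀ u v : V, G.Adj u v → ((u, v) ∈ D ↔ (v, u) ∉ D)

/-- `D` contains a directed closed walk, equivalently a directed cycle. -/
def HasDirCycle (D : Finset (V × V)) : Prop :=
  ∃ (a : V) (l : List V), List.Chain (fun u v => (u, v) ∈ D) a (l ++ [a])

/-- Outerplanar: the vertices can be placed at distinct positions on a circle so that
all edges are pairwise noncrossing chords. -/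
def Outerplanar (G : SimpleGraph V) : Prop :=
  ∃ p : V → ℕ, Function.Injective p ∧ ∀ a b c d : V, G.Adj a b → G.Adj c d →
    ¬ (p a < p c ∧ p c < p b ∧ p b < p d)

/-- 2-connected: at least 3 vertices, connected, and deleting any vertex leaves it connected. -/
def TwoConnected (G : SimpleGraph V) : Prop :=
  3 ≤ Fintype.card V ∧ G.Connected ∧ ∀ v : V, (SimpleGraph.induce {w | w ≠ v} G).Connected

/-- `G` is a cycle: connected and 2-regular. -/
def IsCycleGraph (G : SimpleGraph V) [DecidableRel G.Adj] : Prop :=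
  G.Connected ∧ ∀ v, G.degree v = 2

/-- The arcs of a path/walk given by a list of vertices. -/
def pathArcs (l : List V) : Finset (V × V) := (l.zip l.tail).toFinset

/-- Weighted out-degree. -/
def wOutDeg (D : Finset (V × V)) (w : V × V → ℕ) (v : V) : ℕ :=
  ∑ a ∈ D.filter (fun a => a.1 = v), w a

/-- Weighted in-degree. -/
def wInDeg (D : Finset (V × V)) (w : V × V → ℕ) (v : V) : ℕ :=
  ∑ a ∈ D.filter (fun a => a.2 = v), w a

/-- Weighted Eulerian subdigraph. -/
def IsWEulerian (H : Finset (V × V)) (w : V × V → ℕ) : Prop :=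
  ∀ v, wOutDeg H w v = wInDeg H w v


/-!
Write the vertices in the order `p` in which they lie on the outer face, with `m` first and `M`
last. Two-connectivity makes consecutive vertices, and `M, m`, adjacent, so the boundary is a
Hamiltonian cycle. Orient it along the order (closing with `M → m`), orient each chord from its
left end to its right end when that is the farthest neighbour of the left end, and backwards
otherwise.
A vertex then leaves along its boundary arc, towards its farthest neighbour, and towards the unique
left neighbour (by non-crossing) whose chord to it is overarched, so its out-degree is at most 3;
its incoming boundary arc gives out-degree below the degree. In a bipartite graph every Eulerian
subdigraph has an even number of arcs, so only the even count is nonzero.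
-/

open Finset

section Eulerian

variable {V : Type*} [DecidableEq V] {H : Finset (V × V)}

lemma IsEulerian.card_filter_fst_mem (he : IsEulerian H) (S : Finset V) :
    #{a ∈ H | a.1 ∈ S} = #{a ∈ H | a.2 ∈ S} := by
  rw [← sum_card_fiberwise_eq_card_filter, ← sum_card_fiberwise_eq_card_filter]
  exact sum_congr rfl fun v _ => he v

lemma IsEulerian.even_card (he : IsEulerian H) (S : Finset V)
    (hS : ∀ a ∈ H, a.1 ∈ S ↔ a.2 ∉ S) : Even #H := by
  have hcross : #{a ∈ H | a.1 ∉ S} = #{a ∈ H | a.2 ∈ S} := by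
    congr 1
    exact filter_congr fun a ha => by rw [hS a ha, not_not]
  rw [← card_filter_add_card_filter_not (s := H) (fun a => a.1 ∈ S), hcross,
    ← he.card_filter_fst_mem]
  exact ⟨_, rfl⟩

variable [Fintype V] {D : Finset (V × V)}

lemma isAT_of_forall_even (h : ∀ H ∈ eulerianSubs D, Even #H) : IsAT D := by
  have hodd : {H ∈ eulerianSubs D | Odd #H} = ∅ :=
    filter_eq_empty_iff.2 fun H hH => Nat.not_odd_iff_even.2 (h H hH)
  have hempty : ∅ ∈ eulerianSubs D :=
    mem_filter.2 ⟨empty_mem_powerset D, fun v => by simp [outDeg, inDeg]⟩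
  rw [IsAT, hodd, filter_true_of_mem h, card_empty]
  exact card_ne_zero_of_mem hempty

lemma isAT_of_colorable_two {G : SimpleGraph V} (hD : ∀ a ∈ D, G.Adj a.1 a.2)
    (hG : G.Colorable 2) : IsAT D := by
  obtain ⟨C⟩ := hG
  refine isAT_of_forall_even fun H hH => ?_
  rw [eulerianSubs, mem_filter, mem_powerset] at hH
  refine hH.2.even_card {v | C v = 0} fun a ha => ?_
  have := C.valid (hD a (hH.1 ha))
  simp only [mem_filter, mem_univ, true_and]
  omega

end Eulerian

section Orientation

variable {V : Type*} [DecidableEq V] {G : SimpleGraph V} {D : Finset (V × V)}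

lemma outDeg_le_card_of_forall_mem {v : V} {T : Finset V} (h : ∀ w, (v, w) ∈ D → w ∈ T) :
    outDeg D v ≤ #T := by
  refine card_le_card_of_injOn Prod.snd (fun a ha => ?_) fun a ha b hb hab => ?_
  · rw [mem_coe, mem_filter] at ha
    exact h _ (ha.2 ▸ ha.1)
  · rw [mem_coe, mem_filter] at ha hb
    exact Prod.ext (ha.2.trans hb.2.symm) hab

lemma IsOrientation.outDeg_lt_degree [Fintype V] [DecidableRel G.Adj] (hD : IsOrientation G D)
    {u v : V} (huv : (u, v) ∈ D) : outDeg D v < G.degree v := by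
  have hvu : G.Adj v u := (hD.1 _ huv).symm
  calc outDeg D v ≤ #((G.neighborFinset v).erase u) :=
        outDeg_le_card_of_forall_mem fun w hvw => by
          refine mem_erase.2 ⟨?_, (G.mem_neighborFinset v w).2 (hD.1 _ hvw)⟩
          rintro rfl
          exact (hD.2 v w hvu).1 hvw huv
    _ < #(G.neighborFinset v) := card_erase_lt_of_mem ((G.mem_neighborFinset v u).2 hvu)
    _ = G.degree v := G.card_neighborFinset_eq_degree v

end Orientation

lemma mem_of_adj_closed_avoiding {V : Type*} {G : SimpleGraph V} {z : V}
    (hz : (G.induce {w | w ≠ z}).Connected) {S : Set V}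
    (hS : ∀ s t, s ∈ S → t ≠ z → G.Adj s t → t ∈ S) {u v : V} (hu : u ∈ S) (huz : u ≠ z)
    (hvz : v ≠ z) : v ∈ S := by
  by_contra hv
  obtain ⟨W⟩ := hz.preconnected ⟨u, huz⟩ ⟨v, hvz⟩
  obtain ⟨d, -, hd₁, hd₂⟩ := W.exists_boundary_dart {x | x.1 ∈ S} hu hv
  exact hd₂ (hS _ _ hd₁ d.snd.2 d.adj)

section Outerplanar

variable {V α : Type*} [LinearOrder α]

structure IsOuterplanarEmbedding (G : SimpleGraph V) (p : V → α) : Prop where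
  injective : Function.Injective p
  not_crossing :
    ∀ ⦃a b c d⦄, G.Adj a b → G.Adj c d → ¬ (p a < p c ∧ p c < p b ∧ p b < p d)

def Consecutive (p : V → α) (u w : V) : Prop :=
  p u < p w ∧ ∀ x, p u < p x → p w ≤ p x

lemma exists_consecutive_of_lt [Finite V] {p : V → α} {x v : V} (h : p x < p v) :
    ∃ u, Consecutive p u v := by
  obtain ⟨u, hu, humax⟩ := Set.exists_max_image {y | p y < p v} p (Set.toFinite _) ⟨x, h⟩
  exact ⟨u, hu, fun y hy => not_lt.1 fun hyv => (humax y hyv).not_gt hy⟩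

variable [Finite V] {G : SimpleGraph V} {p : V → α}

namespace IsOuterplanarEmbedding

variable (hp : IsOuterplanarEmbedding G p) (hcut : ∀ z, (G.induce {w | w ≠ z}).Connected)
include hp hcut

lemma adj_of_consecutive_of_exists_adj_right {u w : V} (huw : Consecutive p u w)
    (hR : ∃ x, G.Adj u x ∧ p w ≤ p x) : G.Adj u w := by
  obtain ⟨b, ⟨hub, hwb⟩, hbmin⟩ :=
    Set.exists_min_image {x | G.Adj u x ∧ p w ≤ p x} p (Set.toFinite _) hR
  -- otherwise `b` separates `w` from `u`
  by_contra huw'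
  have hbw : b ≠ w := by rintro rfl; exact huw' hub
  have hwb' : p w < p b := hwb.lt_of_ne (hp.injective.ne hbw.symm)
  have hu := mem_of_adj_closed_avoiding (hcut b) (S := {s | p w ≤ p s ∧ p s < p b}) ?_
    ⟨le_rfl, hwb'⟩ hbw.symm hub.ne
  · exact not_le.2 huw.1 hu.1
  rintro s t ⟨hws, hsb⟩ htb hst
  have hus : p u < p s := huw.1.trans_le hws
  constructor
  · by_contra htw
    have htu : p t ≤ p u := not_lt.1 fun hut => htw (huw.2 t hut)
    rcases htu.lt_or_eq with htu | htu
    · exact hp.not_crossing hst.symm hub ⟨htu, hus, hsb⟩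
    · exact not_le.2 hsb (hbmin s ⟨hp.injective htu ▸ hst.symm, hws⟩)
  · by_contra hbt
    have hbt : p b < p t := (not_lt.1 hbt).lt_of_ne (hp.injective.ne htb.symm)
    exact hp.not_crossing hub hst ⟨hus, hsb, hbt⟩

lemma exists_adj_right_of_consecutive (hconn : G.Connected) {u w : V}
    (huw : Consecutive p u w) : ∃ x, G.Adj u x ∧ p w ≤ p x := by
  by_contra hnone
  simp only [not_exists, not_and, not_le] at hnone
  have hgap : {e : V × V | G.Adj e.1 e.2 ∧ p e.1 ≤ p u ∧ p w ≤ p e.2}.Nonempty := by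
    obtain ⟨W⟩ := hconn.preconnected u w
    obtain ⟨d, -, hd₁, hd₂⟩ := W.exists_boundary_dart {x | p x ≤ p u} le_rfl (not_le.2 huw.1)
    exact ⟨d.toProd, d.adj, hd₁, huw.2 _ (not_le.1 hd₂)⟩
  -- the left end `a` of the innermost edge across the gap separates `u` from `b`
  obtain ⟨⟨a, b⟩, ⟨hab, hau, hwb⟩, hamax⟩ :=
    Set.exists_max_image _ (fun e => p e.1) (Set.toFinite _) hgap
  have hau : p a < p u :=
    hau.lt_of_ne fun h => (hnone b (hp.injective h ▸ hab)).not_ge hwb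
  have hb := mem_of_adj_closed_avoiding (hcut a) (S := {s | p a < p s ∧ p s ≤ p u}) ?_
    ⟨hau, le_rfl⟩ (ne_of_apply_ne p hau.ne') hab.ne'
  · exact lt_irrefl _ (hb.2.trans_lt (huw.1.trans_le hwb))
  rintro s t ⟨has, hsu⟩ hta hst
  have hsb : p s < p b := hsu.trans_lt (huw.1.trans_le hwb)
  constructor
  · by_contra hat
    have hta : p t < p a := (not_lt.1 hat).lt_of_ne (hp.injective.ne hta)
    exact hp.not_crossing hst.symm hab ⟨hta, has, hsb⟩
  · by_contra hut
    exact not_le.2 has (hamax (s, t) ⟨hst, hsu, huw.2 t (not_le.1 hut)⟩)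

lemma adj_of_consecutive (hconn : G.Connected) {u w : V} (huw : Consecutive p u w) :
    G.Adj u w :=
  hp.adj_of_consecutive_of_exists_adj_right hcut huw
    (hp.exists_adj_right_of_consecutive hcut hconn huw)

lemma adj_first_last (hconn : G.Connected) {m M : V} (hm : ∀ x, p m ≤ p x)
    (hM : ∀ x, p x ≤ p M) (hmM : m ≠ M) : G.Adj m M := by
  have hnbr : {x | G.Adj m x}.Nonempty := by
    obtain ⟨W⟩ := hconn.preconnected m M
    obtain ⟨d, -, hd₁, -⟩ := W.exists_boundary_dart {m} rfl hmM.symm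
    exact ⟨d.snd, hd₁ ▸ d.adj⟩
  obtain ⟨b, hmb, hbmax⟩ := Set.exists_max_image _ p (Set.toFinite _) hnbr
  -- otherwise `b` separates `m` from `M`
  by_contra hmM'
  have hbM : M ≠ b := by rintro rfl; exact hmM' hmb
  have hM' := mem_of_adj_closed_avoiding (hcut b) (S := {s | p s < p b}) ?_
    ((hm b).lt_of_ne (hp.injective.ne hmb.ne)) hmb.ne hbM
  · exact not_le.2 hM' (hM b)
  intro s t hs htb hst
  by_contra hbt
  have hbt : p b < p t := (not_lt.1 hbt).lt_of_ne (hp.injective.ne htb.symm)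
  rcases (hm s).lt_or_eq with hms | hms
  · exact hp.not_crossing hmb hst ⟨hms, hs, hbt⟩
  · exact not_le.2 hbt (hbmax t (hp.injective hms ▸ hst))

end IsOuterplanarEmbedding

end Outerplanar

section OrientAlong

variable {V α : Type*} [Fintype V] [LinearOrder α] {G : SimpleGraph V} {p : V → α}

noncomputable def orientAlong (G : SimpleGraph V) (p : V → α) (fwd : V → V → Prop) :
    Finset (V × V) :=
  open Classical in
  {a | G.Adj a.1 a.2 ∧ (p a.1 < p a.2 ∧ fwd a.1 a.2 ∨ p a.2 < p a.1 ∧ ¬ fwd a.2 a.1)}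

lemma mem_orientAlong {fwd : V → V → Prop} {a : V × V} :
    a ∈ orientAlong G p fwd ↔
      G.Adj a.1 a.2 ∧ (p a.1 < p a.2 ∧ fwd a.1 a.2 ∨ p a.2 < p a.1 ∧ ¬ fwd a.2 a.1) := by
  simp [orientAlong]

lemma isOrientation_orientAlong (hp : Function.Injective p) (fwd : V → V → Prop) :
    IsOrientation G (orientAlong G p fwd) := by
  refine ⟨fun a ha => (mem_orientAlong.1 ha).1, fun u v huv => ?_⟩
  simp only [mem_orientAlong, huv, huv.symm, true_and]
  rcases (hp.ne huv.ne).lt_or_gt with h | h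
  · simp [h, h.not_gt]
  · simp [h, h.not_gt]

def IsForward (G : SimpleGraph V) (p : V → α) (m M u w : V) : Prop :=
  ¬ (u = m ∧ w = M) ∧ (Consecutive p u w ∨ ∀ x, G.Adj u x → p x ≤ p w)

open Classical in
lemma card_filter_consecutive_le_one (hp : Function.Injective p) (v : V) :
    #{w | Consecutive p v w} ≤ 1 :=
  card_le_one.2 fun a ha b hb => by
    rw [mem_filter] at ha hb
    exact hp ((ha.2.2 b hb.2.1).antisymm (hb.2.2 a ha.2.1))

open Classical in
lemma card_filter_farthest_le_one (hp : Function.Injective p) (v : V) :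
    #{w | G.Adj v w ∧ ∀ x, G.Adj v x → p x ≤ p w} ≤ 1 :=
  card_le_one.2 fun a ha b hb => by
    rw [mem_filter] at ha hb
    exact hp ((hb.2.2 a ha.2.1).antisymm (ha.2.2 b hb.2.1))

open Classical in
lemma IsOuterplanarEmbedding.card_filter_overarched_le_one (hp : IsOuterplanarEmbedding G p)
    (v : V) : #{w | G.Adj w v ∧ p w < p v ∧ ∃ x, G.Adj w x ∧ p v < p x} ≤ 1 := by
  refine card_le_one.2 fun a ha b hb => ?_
  simp only [mem_filter, mem_univ, true_and] at ha hb
  obtain ⟨hav, hav', x, hax, hvx⟩ := ha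
  obtain ⟨hbv, hbv', y, hby, hvy⟩ := hb
  rcases lt_trichotomy (p a) (p b) with h | h | h
  · exact (hp.not_crossing hav hby ⟨h, hbv', hvy⟩).elim
  · exact hp.injective h
  · exact (hp.not_crossing hbv hax ⟨h, hav', hvx⟩).elim

variable [DecidableEq V] {m M : V}

lemma outDeg_orientAlong_isForward_le_three (hp : IsOuterplanarEmbedding G p)
    (hM : ∀ x, p x ≤ p M) (v : V) : outDeg (orientAlong G p (IsForward G p m M)) v ≤ 3 := by
  by_cases hv : v = M
  · subst hv
    refine (outDeg_le_card_of_forall_mem (T := {m}) fun w hw => ?_).trans (by simp)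
    obtain ⟨-, ⟨hvw, -⟩ | ⟨-, hfwd⟩⟩ := mem_orientAlong.1 hw
    · exact (not_le.2 hvw (hM w)).elim
    · by_contra hwm
      exact hfwd ⟨fun h => hwm (mem_singleton.2 h.1), Or.inr fun x _ => hM x⟩
  · classical
    calc outDeg (orientAlong G p (IsForward G p m M)) v
        ≤ #(({w | Consecutive p v w} : Finset V) ∪
            ({w | G.Adj v w ∧ ∀ x, G.Adj v x → p x ≤ p w} : Finset V) ∪
            ({w | G.Adj w v ∧ p w < p v ∧ ∃ x, G.Adj w x ∧ p v < p x} : Finset V)) := by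
          refine outDeg_le_card_of_forall_mem fun w hw => ?_
          simp only [mem_union, mem_filter, mem_univ, true_and]
          obtain ⟨hvw, ⟨-, -, hcons | hfar⟩ | ⟨hwv, hfwd⟩⟩ := mem_orientAlong.1 hw
          · exact Or.inl (Or.inl hcons)
          · exact Or.inl (Or.inr ⟨hvw, hfar⟩)
          · refine Or.inr ⟨hvw.symm, hwv, ?_⟩
            by_contra hnone
            simp only [not_exists, not_and, not_lt] at hnone
            exact hfwd ⟨fun h => hv h.2, Or.inr hnone⟩
      _ ≤ 1 + 1 + 1 := (card_union_le _ _).trans <| add_le_add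
          ((card_union_le _ _).trans <| add_le_add
            (card_filter_consecutive_le_one hp.injective v)
            (card_filter_farthest_le_one hp.injective v))
          (hp.card_filter_overarched_le_one v)

lemma exists_mem_orientAlong_isForward (hp : IsOuterplanarEmbedding G p) (hconn : G.Connected)
    (hcut : ∀ z, (G.induce {w | w ≠ z}).Connected) (hV : 2 < Fintype.card V)
    (hm : ∀ x, p m ≤ p x) (hM : ∀ x, p x ≤ p M) (v : V) :
    ∃ u, (u, v) ∈ orientAlong G p (IsForward G p m M) := by
  obtain ⟨x, -, hx⟩ := exists_mem_notMem_of_card_lt_card (s := {m, M}) (t := univ)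
    (card_le_two.trans_lt hV)
  simp only [mem_insert, mem_singleton, not_or] at hx
  have hmx : p m < p x := (hm x).lt_of_ne (hp.injective.ne (Ne.symm hx.1))
  have hxM : p x < p M := (hM x).lt_of_ne (hp.injective.ne hx.2)
  by_cases hv : v = m
  · subst hv
    have hmM := hp.adj_first_last hcut hconn hm hM (ne_of_apply_ne p (hmx.trans hxM).ne)
    exact ⟨M, mem_orientAlong.2 ⟨hmM.symm, Or.inr ⟨hmx.trans hxM, fun h => h.1 ⟨rfl, rfl⟩⟩⟩⟩
  · obtain ⟨u, hu⟩ :=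
      exists_consecutive_of_lt ((hm v).lt_of_ne (hp.injective.ne (Ne.symm hv)))
    refine ⟨u, mem_orientAlong.2
      ⟨hp.adj_of_consecutive hcut hconn hu, Or.inl ⟨hu.1, ?_, Or.inl hu⟩⟩⟩
    rintro ⟨rfl, rfl⟩
    exact not_le.2 hxM (hu.2 x hmx)

end OrientAlong

theorem stmt6 (G : SimpleGraph V) [DecidableRel G.Adj]
    (h2 : TwoConnected G) (hop : Outerplanar G) (hbip : G.Colorable 2) :
    ∃ D : Finset (V × V), IsOrientation G D ∧
      (∀ v, outDeg D v < min 4 (G.degree v)) ∧ IsAT D := by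
  obtain ⟨hV, hconn, hcut⟩ := h2
  obtain ⟨p, hinj, hcross⟩ := hop
  have hp : IsOuterplanarEmbedding G p := ⟨hinj, hcross⟩
  have : Nonempty V := hconn.nonempty
  obtain ⟨m, hm⟩ := Finite.exists_min p
  obtain ⟨M, hM⟩ := Finite.exists_max p
  have hD := isOrientation_orientAlong (G := G) hinj (IsForward G p m M)
  refine ⟨_, hD, fun v => lt_min ?_ ?_, isAT_of_colorable_two hD.1 hbip⟩
  · exact Nat.lt_succ_of_le (outDeg_orientAlong_isForward_le_three hp hM v)
  · obtain ⟨u, hu⟩ := exists_mem_orientAlong_isForward hp hconn hcut hV hm hM v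
    exact hD.outDeg_lt_degree hu
end

section
/- Every 2-connected outerplanar graph that is not a cycle contains an ear: an induced cycle (u_1, u_2, ..., u_r) with r ≥ 3 such that d_G(u_i) = 2 for all 2 ≤ i ≤ r − 1 and d_G(u_1), d_G(u_r) ≥ 3. -/
variable {V : Type*} [Fintype V] [DecidableEq V]

/-!
Place the vertices on the circle in the order of the outerplanar embedding. Two vertices that are
consecutive on the circle are adjacent: otherwise, among the edges jumping over the gap between
them, the innermost one has an endpoint that is a cut vertex. So the circle is a Hamiltonian cycle
of `G`, and as `G` is not a cycle it has a chord. A chord `(i, j)` with `j - i` minimal cuts off an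
ear: since edges do not cross, a vertex strictly between `i` and `j` only has neighbours in
`[i, j]`, and by minimality these are its two neighbours on the circle.
-/

namespace SimpleGraph

variable {W : Type*} {H : SimpleGraph W}

theorem Connected.exists_adj_mem_not_mem (hH : H.Connected) {S : Set W} {x y : W}
    (hx : x ∈ S) (hy : y ∉ S) : ∃ a ∈ S, ∃ b ∉ S, H.Adj a b := by
  obtain ⟨d, -, hd₁, hd₂⟩ := (hH.preconnected x y).some.exists_boundary_dart S hx hy
  exact ⟨d.fst, hd₁, d.snd, hd₂, d.adj⟩

theorem exists_adj_mem_not_mem_of_connected_induce {v : W}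
    (hH : (H.induce {w | w ≠ v}).Connected) {S : Set W} {x y : W} (hx : x ∈ S) (hy : y ∉ S)
    (hxv : x ≠ v) (hyv : y ≠ v) : ∃ a ∈ S, ∃ b ∉ S, b ≠ v ∧ H.Adj a b := by
  obtain ⟨a, ha, b, hb, hab⟩ :=
    hH.exists_adj_mem_not_mem (S := {z | z.1 ∈ S}) (x := ⟨x, hxv⟩) (y := ⟨y, hyv⟩) hx hy
  exact ⟨a, ha, b, hb, b.2, hab⟩

theorem three_le_degree_of_adj {v a b c : W} [Fintype (H.neighborSet v)] (ha : H.Adj v a)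
    (hb : H.Adj v b) (hc : H.Adj v c) (hab : a ≠ b) (hac : a ≠ c) (hbc : b ≠ c) :
    3 ≤ H.degree v := by
  classical
  rw [← card_neighborFinset_eq_degree]
  calc 3 = ({a, b, c} : Finset W).card := by
        rw [Finset.card_insert_of_notMem (by simp [hab, hac]), Finset.card_pair hbc]
    _ ≤ _ := Finset.card_le_card (by intro w; simp only [Finset.mem_insert,
        Finset.mem_singleton, mem_neighborFinset]; rintro (rfl | rfl | rfl) <;> assumption)

theorem degree_eq_two_of_adj {v a b : W} [Fintype (H.neighborSet v)] (ha : H.Adj v a)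
    (hb : H.Adj v b) (hab : a ≠ b) (h : ∀ w, H.Adj v w → w = a ∨ w = b) : H.degree v = 2 := by
  classical
  have : H.neighborFinset v = {a, b} := by
    ext w
    simp only [mem_neighborFinset, Finset.mem_insert, Finset.mem_singleton]
    exact ⟨h w, by rintro (rfl | rfl) <;> assumption⟩
  rw [← card_neighborFinset_eq_degree, this, Finset.card_pair hab]

end SimpleGraph

theorem List.zip_range'_range'_succ (s m : ℕ) :
    (List.range' s m).zip (List.range' (s + 1) m) = (List.range' s m).map fun k => (k, k + 1) := by
  induction m generalizing s with
  | zero => rfl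
  | succ m ih => simp [List.range'_succ, ih]

theorem List.zip_cons_map_range' {α : Type*} (F : ℕ → α) (i m : ℕ) :
    (F i :: (List.range' (i + 1) m).map F).zip ((List.range' (i + 1) m).map F ++ [F i]) =
      (List.range' i m).map (fun k => (F k, F (k + 1))) ++ [(F (i + m), F i)] := by
  rw [← List.map_cons, ← List.range'_succ, List.range'_concat, List.map_append, one_mul,
    List.map_singleton, List.zip_append (by simp), List.zip_map, List.zip_range'_range'_succ,
    List.map_map]
  rfl

theorem List.mem_zip_cons_map_range' {α : Type*} {F : ℕ → α} {i m : ℕ} {x y : α} :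
    (x, y) ∈ (F i :: (List.range' (i + 1) m).map F).zip ((List.range' (i + 1) m).map F ++ [F i]) ↔
      (∃ k, i ≤ k ∧ k < i + m ∧ F k = x ∧ F (k + 1) = y) ∨ (x = F (i + m) ∧ y = F i) := by
  simp only [List.zip_cons_map_range', List.mem_append, List.mem_map, List.mem_range'_1,
    List.mem_singleton, Prod.mk.injEq, and_assoc]

/-- `u :: l` is the ear `u₁, …, uᵣ`; the pairs of `(u :: l).zip (l ++ [u])` are its edges. -/
def IsEar {W : Type*} [Fintype W] (G : SimpleGraph W) [DecidableRel G.Adj] (u : W)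
    (l : List W) : Prop :=
  l ≠ [] ∧ (u :: l).Nodup ∧ 3 ≤ (u :: l).length ∧ List.IsChain G.Adj (u :: (l ++ [u])) ∧
    (∀ x ∈ u :: l, ∀ y ∈ u :: l, G.Adj x y →
      ((x, y) ∈ (u :: l).zip (l ++ [u]) ∨ (y, x) ∈ (u :: l).zip (l ++ [u]))) ∧
    (∀ x ∈ l.dropLast, G.degree x = 2) ∧
    3 ≤ G.degree u ∧ ∀ h : l ≠ [], 3 ≤ G.degree (l.getLast h)

theorem isEar_map_range' {W : Type*} [Fintype W] {G : SimpleGraph W} [DecidableRel G.Adj]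
    {F : ℕ → W} {i j : ℕ} (hij : i + 2 ≤ j) (hinj : Set.InjOn F (Set.Icc i j))
    (hpath : ∀ k, i ≤ k → k < j → G.Adj (F k) (F (k + 1))) (hclose : G.Adj (F j) (F i))
    (hind : ∀ a b, i ≤ a → a < b → b ≤ j → G.Adj (F a) (F b) → b = a + 1 ∨ (a = i ∧ b = j))
    (hint : ∀ k, i < k → k < j → G.degree (F k) = 2)
    (hi : 3 ≤ G.degree (F i)) (hj : 3 ≤ G.degree (F j)) :
    IsEar G (F i) ((List.range' (i + 1) (j - i)).map F) := by
  obtain ⟨m, rfl⟩ := Nat.exists_eq_add_of_le (by omega : i ≤ j)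
  rw [Nat.add_sub_cancel_left]
  set l := (List.range' (i + 1) m).map F
  have hl : l = (List.range' (i + 1) (m - 1)).map F ++ [F (i + m)] := by
    rw [← List.map_singleton, ← List.map_append, show i + m = i + 1 + 1 * (m - 1) by omega,
      ← List.range'_concat, Nat.sub_add_cancel (by omega)]
  have hcons : F i :: l = (List.range' i (m + 1)).map F := by
    simp only [l, List.range'_succ, List.map_cons]
  have hmem : ∀ x ∈ F i :: l, ∃ k, i ≤ k ∧ k ≤ i + m ∧ F k = x := by
    simp only [hcons, List.mem_map, List.mem_range'_1]
    rintro x ⟨k, hk, rfl⟩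
    exact ⟨k, hk.1, by omega, rfl⟩
  refine ⟨?_, ?_, ?_, ?_, ?_, ?_, hi, fun h => ?_⟩
  · simp only [l, ne_eq, List.map_eq_nil_iff, List.range'_eq_nil_iff]
    omega
  · rw [hcons]
    refine List.Nodup.map_on (fun a ha b hb hab => hinj ?_ ?_ hab) List.nodup_range'
    all_goals simp only [List.mem_range'_1] at ha hb; simp only [Set.mem_Icc]; omega
  · simp only [l, List.length_cons, List.length_map, List.length_range']
    omega
  · rw [← List.cons_append, List.isChain_cons_append_singleton_iff_forall₂, List.forall₂_iff_zip]
    refine ⟨by simp [l], fun {x y} hxy => ?_⟩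
    rcases List.mem_zip_cons_map_range'.1 hxy with ⟨k, hik, hkj, rfl, rfl⟩ | ⟨rfl, rfl⟩
    exacts [hpath k hik hkj, hclose]
  · intro x hx y hy hxy
    obtain ⟨a, hia, haj, rfl⟩ := hmem x hx
    obtain ⟨b, hib, hbj, rfl⟩ := hmem y hy
    rcases lt_trichotomy a b with hab | rfl | hab
    · rcases hind a b hia hab hbj hxy with rfl | ⟨rfl, rfl⟩
      · exact Or.inl (List.mem_zip_cons_map_range'.2 (Or.inl ⟨a, hia, by omega, rfl, rfl⟩))
      · exact Or.inr (List.mem_zip_cons_map_range'.2 (Or.inr ⟨rfl, rfl⟩))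
    · exact (G.loopless.irrefl _ hxy).elim
    · rcases hind b a hib hab haj hxy.symm with rfl | ⟨rfl, rfl⟩
      · exact Or.inr (List.mem_zip_cons_map_range'.2 (Or.inl ⟨b, hib, by omega, rfl, rfl⟩))
      · exact Or.inl (List.mem_zip_cons_map_range'.2 (Or.inr ⟨rfl, rfl⟩))
  · simp only [hl, List.dropLast_concat, List.mem_map, List.mem_range'_1]
    rintro x ⟨k, hk, rfl⟩
    exact hint k (by omega) (by omega)
  · have hlast : ∀ h : l ≠ [], l.getLast h = F (i + m) := by
      rw [hl]
      exact fun _ => List.getLast_concat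
    rwa [hlast]

def cycSucc (n k : ℕ) : ℕ := if k + 1 = n then 0 else k + 1

def cycPred (n k : ℕ) : ℕ := if k = 0 then n - 1 else k - 1

/-- An edge between two positions that are not neighbours on the circle; the condition
`t + 2 ≤ s + n` excludes the pair `(0, n - 1)`. -/
def IsChord {W : Type*} (G : SimpleGraph W) (n : ℕ) (F : ℕ → W) (s t : ℕ) : Prop :=
  s + 2 ≤ t ∧ t < n ∧ t + 2 ≤ s + n ∧ G.Adj (F s) (F t)

theorem cycSucc_lt {n k : ℕ} (hk : k < n) : cycSucc n k < n := by
  unfold cycSucc; split_ifs <;> omega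

theorem cycPred_lt {n k : ℕ} (hk : k < n) : cycPred n k < n := by
  unfold cycPred; split_ifs <;> omega

theorem eq_cycPred_or_eq_cycSucc_or_isChord {W : Type*} {G : SimpleGraph W}
    {n : ℕ} {F : ℕ → W} {k m : ℕ} (hk : k < n) (hm : m < n) (hkm : G.Adj (F k) (F m)) :
    m = cycPred n k ∨ m = cycSucc n k ∨ IsChord G n F m k ∨ IsChord G n F k m := by
  have hne : m ≠ k := fun h => G.loopless.irrefl _ (h ▸ hkm)
  simp only [IsChord, cycPred, cycSucc, hkm, hkm.symm, and_true]
  split_ifs <;> omega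

structure NoncrossingLayout {W : Type*} (G : SimpleGraph W) (n : ℕ) (F : ℕ → W) : Prop where
  bijOn : Set.BijOn F (Set.Iio n) Set.univ
  noncrossing : ∀ ⦃a c b d : ℕ⦄, a < c → c < b → b < d → d < n →
    G.Adj (F a) (F b) → ¬ G.Adj (F c) (F d)

theorem NoncrossingLayout.exists_of_outerplanar {W : Type*} [Fintype W] [Nonempty W]
    {G : SimpleGraph W} (hG : Outerplanar G) : ∃ F, NoncrossingLayout G (Fintype.card W) F := by
  obtain ⟨p, hp, hcross⟩ := hG
  let : LinearOrder W := LinearOrder.lift' p hp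
  let e := Fintype.orderIsoFinOfCardEq W rfl
  let F k := if h : k < Fintype.card W then e ⟨k, h⟩ else Classical.arbitrary W
  have hF : ∀ k (hk : k < Fintype.card W), F k = e ⟨k, hk⟩ := fun k hk => dif_pos hk
  refine ⟨F, ⟨fun _ _ => trivial, fun a ha b hb hab => ?_, fun v _ => ?_⟩, ?_⟩
  · simpa [hF a ha, hF b hb, Fin.ext_iff] using hab
  · exact ⟨e.symm v, (e.symm v).2, by simp [hF _ (e.symm v).2]⟩
  · intro a c b d hac hcb hbd hd hab hcd
    rw [hF a (by omega), hF b (by omega)] at hab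
    rw [hF c (by omega), hF d hd] at hcd
    exact hcross _ _ _ _ hab hcd ⟨e.strictMono (Fin.mk_lt_mk.2 hac),
      e.strictMono (Fin.mk_lt_mk.2 hcb), e.strictMono (Fin.mk_lt_mk.2 hbd)⟩

namespace NoncrossingLayout

variable {W : Type*} {G : SimpleGraph W} {n : ℕ} {F : ℕ → W}

theorem eq_of_apply_eq (hL : NoncrossingLayout G n F) {a b : ℕ} (ha : a < n) (hb : b < n)
    (h : F a = F b) : a = b :=
  hL.bijOn.injOn ha hb h

theorem apply_ne (hL : NoncrossingLayout G n F) {a b : ℕ} (ha : a < n) (hb : b < n)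
    (h : a ≠ b) : F a ≠ F b :=
  mt (hL.eq_of_apply_eq ha hb) h

theorem exists_apply_eq (hL : NoncrossingLayout G n F) (v : W) : ∃ k < n, F k = v :=
  hL.bijOn.surjOn (Set.mem_univ v)

theorem mem_Icc_of_adj (hL : NoncrossingLayout G n F) {a b k m : ℕ} (hak : a < k) (hkb : k < b)
    (hb : b < n) (hm : m < n) (hab : G.Adj (F a) (F b)) (hkm : G.Adj (F k) (F m)) :
    a ≤ m ∧ m ≤ b := by
  constructor
  · by_contra! h
    exact hL.noncrossing h hak hkb hb hkm.symm hab
  · by_contra! h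
    exact hL.noncrossing hak hkb h hm hab hkm

theorem exists_adj_across_Icc (hL : NoncrossingLayout G n F) (hG : G.Connected)
    {s t y : ℕ} (hst : s ≤ t) (ht : t < n) (hy : y < n) (hyst : y < s ∨ t < y) :
    ∃ k m, s ≤ k ∧ k ≤ t ∧ m < n ∧ (m < s ∨ t < m) ∧ G.Adj (F k) (F m) := by
  obtain ⟨_, ⟨k, hk, rfl⟩, b, hb, hkb⟩ := hG.exists_adj_mem_not_mem
    (S := F '' Set.Icc s t) ⟨s, ⟨le_rfl, hst⟩, rfl⟩ (x := F s) (y := F y) (by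
      rintro ⟨k, hk, hky⟩
      have := hL.eq_of_apply_eq (hk.2.trans_lt ht) hy hky
      grind)
  obtain ⟨m, hm, rfl⟩ := hL.exists_apply_eq b
  refine ⟨k, m, hk.1, hk.2, hm, ?_, hkb⟩
  by_contra! h
  exact hb ⟨m, h, rfl⟩

theorem exists_adj_across_Icc_of_connected_induce (hL : NoncrossingLayout G n F) {c : ℕ}
    (hG : (G.induce {w | w ≠ F c}).Connected) (hc : c < n) {s t y : ℕ} (hst : s ≤ t) (ht : t < n)
    (hy : y < n) (hyst : y < s ∨ t < y) (hcst : c < s ∨ t < c) (hyc : y ≠ c) :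
    ∃ k m, s ≤ k ∧ k ≤ t ∧ m < n ∧ (m < s ∨ t < m) ∧ m ≠ c ∧ G.Adj (F k) (F m) := by
  obtain ⟨_, ⟨k, hk, rfl⟩, b, hb, hbc, hkb⟩ :=
    SimpleGraph.exists_adj_mem_not_mem_of_connected_induce hG (S := F '' Set.Icc s t)
    ⟨s, ⟨le_rfl, hst⟩, rfl⟩ (x := F s) (y := F y)
    (by
      rintro ⟨k, hk, hky⟩
      have := hL.eq_of_apply_eq (hk.2.trans_lt ht) hy hky
      grind)
    (fun h => by have := hL.eq_of_apply_eq (hst.trans_lt ht) hc h; omega)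
    (fun h => hyc (hL.eq_of_apply_eq hy hc h))
  obtain ⟨m, hm, rfl⟩ := hL.exists_apply_eq b
  refine ⟨k, m, hk.1, hk.2, hm, ?_, fun h => hbc (h ▸ rfl), hkb⟩
  by_contra! h
  exact hb ⟨m, h, rfl⟩

theorem adj_succ (hL : NoncrossingLayout G n F) (hG : G.Connected)
    (hcut : ∀ v, (G.induce {w | w ≠ v}).Connected) {i : ℕ} (hi : i + 1 < n) :
    G.Adj (F i) (F (i + 1)) := by
  classical
  by_contra hno
  -- among the edges jumping over the gap between `i` and `i + 1`, take one with a maximal left end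
  let P a := ∃ b, i < b ∧ b < n ∧ G.Adj (F a) (F b)
  obtain ⟨k₀, m₀, -, hk₀, hm₀, hm₀i, hkm₀⟩ :=
    hL.exists_adj_across_Icc hG (s := 0) (t := i) (y := i + 1) (Nat.zero_le _) (by omega) hi
      (by omega)
  obtain ⟨b, hib, hb, hab⟩ : P (Nat.findGreatest P i) :=
    Nat.findGreatest_spec hk₀ ⟨m₀, by omega, hm₀, hkm₀⟩
  set a := Nat.findGreatest P i
  have hai : a ≤ i := Nat.findGreatest_le i
  rcases hai.lt_or_eq with hai | hai
  · obtain ⟨k, m, hak, hki, hm, hmS, hma, hkm⟩ :=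
      hL.exists_adj_across_Icc_of_connected_induce (hcut (F a)) (c := a) (s := a + 1) (t := i)
        (y := i + 1) (by omega) (by omega) (by omega) (by omega) (by omega) (by omega) (by omega)
    -- `F a` separates `(a, i]` from `i + 1`
    have := hL.mem_Icc_of_adj (by omega : a < k) (by omega : k < b) hb hm hab hkm
    have : k ≤ a := Nat.le_findGreatest hki ⟨m, by omega, hm, hkm⟩
    omega
  · rw [hai] at hab
    -- then the first neighbour of `i` beyond `i + 1` separates the vertices in between
    let Q b := i < b ∧ b < n ∧ G.Adj (F i) (F b)
    have hQ : ∃ b, Q b := ⟨b, hib, hb, hab⟩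
    obtain ⟨hib', hb', hab'⟩ := Nat.find_spec hQ
    set b' := Nat.find hQ
    have hb'i : b' ≠ i + 1 := fun h => hno (h ▸ hab')
    obtain ⟨k, m, hik, hkb, hm, hmS, hmb, hkm⟩ :=
      hL.exists_adj_across_Icc_of_connected_induce (hcut (F b')) (c := b') (s := i + 1)
        (t := b' - 1) (y := i) (by omega) (by omega) (by omega) (by omega) (by omega) (by omega)
        (by omega)
    have := hL.mem_Icc_of_adj (by omega : i < k) (by omega : k < b') hb' hm hab' hkm
    obtain rfl : m = i := by omega
    have := Nat.find_min' hQ ⟨by omega, by omega, hkm.symm⟩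
    omega

theorem adj_zero_last (hL : NoncrossingLayout G n F) (hG : G.Connected)
    (hcut : ∀ v, (G.induce {w | w ≠ v}).Connected) (hn : 2 ≤ n) : G.Adj (F 0) (F (n - 1)) := by
  classical
  by_contra hno
  -- the last neighbour of `0` separates the vertices after it from `0`
  let P b := G.Adj (F 0) (F b)
  obtain ⟨k₀, m₀, -, hk₀, hm₀, -, hkm₀⟩ :=
    hL.exists_adj_across_Icc hG (s := 0) (t := 0) (y := 1) le_rfl (by omega) (by omega)
      (by omega)
  obtain rfl : k₀ = 0 := by omega
  set b := Nat.findGreatest P (n - 1)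
  have hb : G.Adj (F 0) (F b) := Nat.findGreatest_spec (P := P) (by omega) hkm₀
  have hbn : b ≤ n - 1 := Nat.findGreatest_le _
  have hb0 : b ≠ 0 := fun h => G.loopless.irrefl _ (by rwa [h] at hb)
  have hbn' : b ≠ n - 1 := fun h => hno (by rwa [h] at hb)
  obtain ⟨k, m, hbk, hkn, hm, hmS, hmb, hkm⟩ :=
    hL.exists_adj_across_Icc_of_connected_induce (hcut (F b)) (c := b) (s := b + 1) (t := n - 1)
      (y := 0) (by omega) (by omega) (by omega) (by omega) (by omega) (by omega) (by omega)
  rcases Nat.eq_zero_or_pos m with rfl | hm0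
  · have : k ≤ b := Nat.le_findGreatest (by omega) hkm.symm
    omega
  · have := hL.mem_Icc_of_adj hm0 (by omega : m < b) (by omega) (by omega : k < n) hb hkm.symm
    omega

theorem adj_cycSucc (hL : NoncrossingLayout G n F) (hG : G.Connected)
    (hcut : ∀ v, (G.induce {w | w ≠ v}).Connected) (hn : 2 ≤ n) {k : ℕ} (hk : k < n) :
    G.Adj (F k) (F (cycSucc n k)) := by
  unfold cycSucc
  split_ifs with h
  · rw [show k = n - 1 by omega]
    exact (hL.adj_zero_last hG hcut hn).symm
  · exact hL.adj_succ hG hcut (by omega)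

theorem adj_cycPred (hL : NoncrossingLayout G n F) (hG : G.Connected)
    (hcut : ∀ v, (G.induce {w | w ≠ v}).Connected) (hn : 2 ≤ n) {k : ℕ} (hk : k < n) :
    G.Adj (F k) (F (cycPred n k)) := by
  unfold cycPred
  split_ifs with h
  · rw [h]
    exact hL.adj_zero_last hG hcut hn
  · have := hL.adj_succ hG hcut (i := k - 1) (by omega)
    rw [Nat.sub_add_cancel (by omega)] at this
    exact this.symm

theorem degree_eq_two_of_forall_not_isChord [Fintype W] [DecidableRel G.Adj]
    (hL : NoncrossingLayout G n F) (hG : G.Connected)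
    (hcut : ∀ v, (G.induce {w | w ≠ v}).Connected) (hn : 3 ≤ n) {k : ℕ} (hk : k < n)
    (h₁ : ∀ m, ¬ IsChord G n F m k) (h₂ : ∀ m, ¬ IsChord G n F k m) : G.degree (F k) = 2 := by
  refine SimpleGraph.degree_eq_two_of_adj (hL.adj_cycPred hG hcut (by omega) hk)
    (hL.adj_cycSucc hG hcut (by omega) hk)
    (hL.apply_ne (cycPred_lt hk) (cycSucc_lt hk) (by unfold cycPred cycSucc; split_ifs <;> omega))
    fun w hw => ?_
  obtain ⟨m, hm, rfl⟩ := hL.exists_apply_eq w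
  rcases eq_cycPred_or_eq_cycSucc_or_isChord hk hm hw with h | h | h | h
  · exact Or.inl (congrArg F h)
  · exact Or.inr (congrArg F h)
  · exact (h₁ m h).elim
  · exact (h₂ m h).elim

theorem isCycleGraph_of_forall_not_isChord [Fintype W] [DecidableRel G.Adj]
    (hL : NoncrossingLayout G n F) (hG : G.Connected)
    (hcut : ∀ v, (G.induce {w | w ≠ v}).Connected) (hn : 3 ≤ n)
    (h : ∀ s t, ¬ IsChord G n F s t) : IsCycleGraph G := by
  refine ⟨hG, fun v => ?_⟩
  obtain ⟨k, hk, rfl⟩ := hL.exists_apply_eq v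
  exact hL.degree_eq_two_of_forall_not_isChord hG hcut hn hk (h · k) (h k)

theorem isEar_of_isChord_minimal [Fintype W] [DecidableRel G.Adj]
    (hL : NoncrossingLayout G n F) (hG : G.Connected)
    (hcut : ∀ v, (G.induce {w | w ≠ v}).Connected) {i j : ℕ} (hij : IsChord G n F i j)
    (hmin : ∀ s t, IsChord G n F s t → j - i ≤ t - s) :
    IsEar G (F i) ((List.range' (i + 1) (j - i)).map F) := by
  obtain ⟨hij2, hjn, hjn2, hadj⟩ := hij
  refine isEar_map_range' hij2 (fun a ha b hb => hL.eq_of_apply_eq (by grind) (by grind))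
    (fun k _ hk => hL.adj_succ hG hcut (by omega)) hadj.symm ?_ ?_ ?_ ?_
  · intro a b hia hab hbj hadjab
    by_contra h
    have := hmin a b ⟨by omega, by omega, by omega, hadjab⟩
    omega
  · intro k hik hkj
    refine hL.degree_eq_two_of_forall_not_isChord hG hcut (by omega) (by omega)
      (fun m hm => ?_) (fun m hm => ?_)
    · have := hL.mem_Icc_of_adj hik hkj hjn (by have := hm.1; omega) hadj hm.2.2.2.symm
      have := hmin m k hm
      omega
    · have := hL.mem_Icc_of_adj hik hkj hjn hm.2.1 hadj hm.2.2.2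
      have := hmin k m hm
      omega
  · have hp : cycPred n i < n := cycPred_lt (by omega)
    have hpred : cycPred n i ≠ i + 1 ∧ cycPred n i ≠ j := by unfold cycPred; split_ifs <;> omega
    exact SimpleGraph.three_le_degree_of_adj (hL.adj_cycPred hG hcut (by omega) (by omega))
      (hL.adj_succ hG hcut (by omega)) hadj (hL.apply_ne hp (by omega) hpred.1)
      (hL.apply_ne hp hjn hpred.2) (hL.apply_ne (by omega) hjn (by omega))
  · have hs : cycSucc n j < n := cycSucc_lt hjn
    have hsucc : j - 1 ≠ cycSucc n j ∧ cycSucc n j ≠ i := by unfold cycSucc; split_ifs <;> omega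
    have hprev := hL.adj_succ hG hcut (i := j - 1) (by omega)
    rw [Nat.sub_add_cancel (by omega)] at hprev
    exact SimpleGraph.three_le_degree_of_adj hprev.symm (hL.adj_cycSucc hG hcut (by omega) hjn)
      hadj.symm (hL.apply_ne (by omega) hs hsucc.1) (hL.apply_ne (by omega) (by omega) (by omega))
      (hL.apply_ne hs (by omega) hsucc.2)

end NoncrossingLayout

theorem stmt12 (G : SimpleGraph V) [DecidableRel G.Adj]
    (h2 : TwoConnected G) (hop : Outerplanar G) (hnc : ¬ IsCycleGraph G) :
    ∃ (u : V) (l : List V), l ≠ [] ∧ (u :: l).Nodup ∧ 3 ≤ (u :: l).length ∧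
      List.Chain G.Adj u (l ++ [u]) ∧
      (∀ x ∈ u :: l, ∀ y ∈ u :: l, G.Adj x y →
        ((x, y) ∈ (u :: l).zip (l ++ [u]) ∨ (y, x) ∈ (u :: l).zip (l ++ [u]))) ∧
      (∀ x ∈ l.dropLast, G.degree x = 2) ∧
      3 ≤ G.degree u ∧ ∀ h : l ≠ [], 3 ≤ G.degree (l.getLast h) := by
  classical
  obtain ⟨hcard, hG, hcut⟩ := h2
  have : Nonempty V := Fintype.card_pos_iff.mp (by omega)
  obtain ⟨F, hL⟩ := NoncrossingLayout.exists_of_outerplanar hop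
  have hchord : ∃ d s t, IsChord G (Fintype.card V) F s t ∧ t - s = d := by
    by_contra! h
    exact hnc (hL.isCycleGraph_of_forall_not_isChord hG hcut hcard fun s t hst => h _ s t hst rfl)
  obtain ⟨i, j, hij, hd⟩ := Nat.find_spec hchord
  exact ⟨F i, _, hL.isEar_of_isChord_minimal hG hcut hij
    fun s t hst => hd ▸ Nat.find_min' hchord ⟨s, t, hst, rfl⟩⟩
end

section
/- If G is bipartite and D is any orientation of G with d⁺_D(v) ≤ f(v) − 1 for all v, then G is f-AT. In particular, a bipartite graph G is f-AT if and only if G has an orientation with out-degrees strictly below f. -/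
variable {V : Type*} [Fintype V] [DecidableEq V]

lemma euler_even_aux {G : SimpleGraph V} (c : G.Coloring (Fin 2))
    (H : Finset (V × V)) (hH : ∀ a ∈ H, G.Adj a.1 a.2) (he : IsEulerian H) :
    Even H.card := by
  have key : H.card = ∑ a ∈ H, ((c a.1).val + (c a.2).val) := by
    rw [Finset.card_eq_sum_ones]
    refine Finset.sum_congr rfl fun a ha => ?_
    have hne : c a.1 ≠ c a.2 := c.valid (hH a ha)
    have h1 : (c a.1).val < 2 := (c a.1).isLt
    have h2 : (c a.2).val < 2 := (c a.2).isLt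
    have h3 : (c a.1).val ≠ (c a.2).val := fun h => hne (Fin.ext h)
    omega
  have hout : ∑ a ∈ H, (c a.1).val = ∑ v : V, (c v).val * outDeg H v := by
    rw [← Finset.sum_fiberwise H (fun a => a.1) (fun a => (c a.1).val)]
    refine Finset.sum_congr rfl fun v _ => ?_
    rw [outDeg, Finset.sum_congr rfl (fun a ha => ?_), Finset.sum_const, smul_eq_mul,
      mul_comm]
    exact congrArg (fun x => (c x).val) (Finset.mem_filter.mp ha).2
  have hin : ∑ a ∈ H, (c a.2).val = ∑ v : V, (c v).val * inDeg H v := by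
    rw [← Finset.sum_fiberwise H (fun a => a.2) (fun a => (c a.2).val)]
    refine Finset.sum_congr rfl fun v _ => ?_
    rw [inDeg, Finset.sum_congr rfl (fun a ha => ?_), Finset.sum_const, smul_eq_mul,
      mul_comm]
    exact congrArg (fun x => (c x).val) (Finset.mem_filter.mp ha).2
  have : H.card = 2 * ∑ v : V, (c v).val * outDeg H v := by
    rw [key, Finset.sum_add_distrib, hout, hin]
    have : ∑ v : V, (c v).val * inDeg H v = ∑ v : V, (c v).val * outDeg H v :=
      Finset.sum_congr rfl fun v _ => by rw [he v]
    omega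
  exact this ▸ even_two_mul _

theorem stmt14 (G : SimpleGraph V) (hbip : G.Colorable 2) (f : V → ℕ) :
    (∀ D : Finset (V × V), IsOrientation G D → (∀ v, outDeg D v < f v) → IsAT D) ∧
    ((∃ D : Finset (V × V), IsOrientation G D ∧ (∀ v, outDeg D v < f v) ∧ IsAT D) ↔
      (∃ D : Finset (V × V), IsOrientation G D ∧ ∀ v, outDeg D v < f v)) := by
  obtain ⟨c⟩ := hbip
  have hAT : ∀ D : Finset (V × V), IsOrientation G D → IsAT D := by
    intro D hD
    have hodd : (eulerianSubs D).filter (fun H => Odd H.card) = ∅ := by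
      refine Finset.filter_eq_empty_iff.mpr fun H hH => ?_
      simp only [eulerianSubs, Finset.mem_filter, Finset.mem_powerset] at hH
      exact Nat.not_odd_iff_even.mpr
        (euler_even_aux c H (fun a ha => hD.1 a (hH.1 ha)) hH.2)
    have heven : ∅ ∈ (eulerianSubs D).filter (fun H => Even (Finset.card H)) := by
      simp [eulerianSubs, IsEulerian, outDeg, inDeg]
    have hpos : 0 < ((eulerianSubs D).filter (fun H => Even (Finset.card H))).card :=
      Finset.card_pos.mpr ⟨∅, heven⟩
    unfold IsAT
    rw [hodd]
    simp only [Finset.card_empty]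
    omega
  exact ⟨fun D hD _ => hAT D hD,
    ⟨fun ⟨D, h1, h2, _⟩ => ⟨D, h1, h2⟩, fun ⟨D, h1, h2⟩ => ⟨D, h1, h2, hAT D h1⟩⟩⟩
end

section
/- A graph G has an orientation with d⁺_D(v) ≤ k(v) for every vertex v if and only if for every subgraph H of G, |E(H)| ≤ Σ_{v ∈ V(H)} k(v). In particular, every outerplanar graph has an orientation with maximum out-degree at most 2. -/
variable {V : Type*} [Fintype V] [DecidableEq V]

/-!
An orientation with out-degrees at most `k` makes every edge of a subgraph `H` an arc with tail in
`V(H)`, which gives the necessity. Conversely, give every vertex `v` exactly `k v` slots and let each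
edge ask for a slot at one of its endpoints. For a set `s` of edges the available slots are those of
the endpoints of `s`, and the hypothesis for the subgraph induced on these endpoints, which contains
`s`, gives Hall's condition; the endpoint whose slot an edge receives becomes its tail.

For an outerplanar graph it therefore suffices that `|E(H)| ≤ 2 |V(H)|`. Place the vertices of `H`
on the circle and take a shortest chord with a vertex `c` of `H` strictly inside it (any `c` if there
is no such chord). Because chords do not cross, every chord at `c` stays inside that shortest chord,
so has no vertex strictly inside it; hence `c` has at most one neighbour on either side. Deleting `c`
and inducting gives the bound.
-/

open Finset

section Orientation

variable {V : Type*} [DecidableEq V] {G : SimpleGraph V}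

lemma sum_outDeg_eq_card_filter (D : Finset (V × V)) (s : Finset V) :
    ∑ v ∈ s, outDeg D v = #{a ∈ D | a.1 ∈ s} :=
  sum_card_fiberwise_eq_card_filter D s Prod.fst

theorem IsOrientation.card_edgeSet_le [Finite V] {D : Finset (V × V)}
    (hD : IsOrientation G D) (H : G.Subgraph) :
    #H.edgeSet.toFinite.toFinset ≤ ∑ v ∈ H.verts.toFinite.toFinset, outDeg D v := by
  rw [sum_outDeg_eq_card_filter]
  refine (card_le_card ?_).trans (card_image_le (f := fun a : V × V => s(a.1, a.2)))
  intro e he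
  induction e with
  | h u v =>
    have huv : H.Adj u v := by simpa using he
    simp only [mem_image, mem_filter, Set.Finite.mem_toFinset]
    by_cases hD' : (u, v) ∈ D
    · exact ⟨(u, v), ⟨hD', huv.fst_mem⟩, rfl⟩
    · exact ⟨(v, u), ⟨(hD.2 v u (H.adj_sub huv).symm).2 hD', huv.snd_mem⟩, Sym2.eq_swap⟩

variable [Fintype G.edgeSet]

theorem exists_isOrientation_of_tail (tail : G.edgeSet → V)
    (htail : ∀ e : G.edgeSet, tail e ∈ (e : Sym2 V)) :
    ∃ D : Finset (V × V), IsOrientation G D ∧ ∀ v, outDeg D v ≤ #{e | tail e = v} := by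
  set arc : G.edgeSet → V × V := fun e => (tail e, Sym2.Mem.other' (htail e))
  have mk_arc (e : G.edgeSet) : s((arc e).1, (arc e).2) = e := Sym2.other_spec' (htail e)
  refine ⟨univ.image arc, ⟨?_, fun u v huv => ⟨?_, ?_⟩⟩, fun v => ?_⟩
  · simp only [mem_image, mem_univ, true_and, forall_exists_index, forall_apply_eq_imp_iff]
    intro e
    rw [← SimpleGraph.mem_edgeSet, mk_arc]
    exact e.2
  · simp only [mem_image, mem_univ, true_and, not_exists]
    rintro ⟨e, he⟩ e' he'
    have : e = e' := Subtype.ext <| by rw [← mk_arc, ← mk_arc, he, he', Sym2.eq_swap]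
    subst this
    exact huv.ne (congrArg Prod.fst (he.symm.trans he'))
  · intro hvu
    have h := mk_arc ⟨s(u, v), huv⟩
    rw [Sym2.eq_iff] at h
    rcases h with ⟨h1, h2⟩ | ⟨h1, h2⟩
    · exact mem_image.2 ⟨_, mem_univ _, Prod.ext h1 h2⟩
    · exact absurd (mem_image.2 ⟨_, mem_univ _, Prod.ext h1 h2⟩) hvu
  · unfold outDeg
    calc #{a ∈ univ.image arc | a.1 = v} = #(({e | tail e = v} : Finset _).image arc) := by
          congr 1
          ext a
          simp only [mem_filter, mem_image, mem_univ, true_and]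
          constructor
          · rintro ⟨⟨e, rfl⟩, rfl⟩
            exact ⟨e, rfl, rfl⟩
          · rintro ⟨e, he, rfl⟩
            exact ⟨⟨e, rfl⟩, he⟩
      _ ≤ _ := card_image_le

lemma card_filter_sigma_fst_mem [Fintype V] (k : V → ℕ) (W : Finset V) :
    #{x : Σ v, Fin (k v) | x.1 ∈ W} = ∑ v ∈ W, k v := by
  rw [show ({x : Σ v, Fin (k v) | x.1 ∈ W} : Finset _) = W.sigma fun _ => univ by ext; simp,
    card_sigma]
  simp

theorem exists_tail_of_card_edgeSet_le [Fintype V] (k : V → ℕ)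
    (hk : ∀ H : G.Subgraph,
      #H.edgeSet.toFinite.toFinset ≤ ∑ v ∈ H.verts.toFinite.toFinset, k v) :
    ∃ tail : G.edgeSet → V, (∀ e : G.edgeSet, tail e ∈ (e : Sym2 V)) ∧
      ∀ v, #{e | tail e = v} ≤ k v := by
  classical
  set slots : G.edgeSet → Finset (Σ v, Fin (k v)) := fun e => {x | x.1 ∈ (e : Sym2 V)}
  have hall (s : Finset G.edgeSet) : #s ≤ #(s.biUnion slots) := by
    set W : Finset V := {v | ∃ e ∈ s, v ∈ (e : Sym2 V)}
    have hslots : s.biUnion slots = ({x : Σ v, Fin (k v) | x.1 ∈ W} : Finset _) := by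
      ext
      simp [slots, W]
    have hs : s.image Subtype.val ⊆ ((⊤ : G.Subgraph).induce W).edgeSet.toFinite.toFinset := by
      rintro _ he
      obtain ⟨⟨e, heG⟩, hes, rfl⟩ := mem_image.1 he
      induction e with
      | h u v =>
        simp only [Set.Finite.mem_toFinset, SimpleGraph.Subgraph.mem_edgeSet,
          SimpleGraph.Subgraph.induce_adj, SimpleGraph.Subgraph.top_adj, coe_filter, mem_univ,
          true_and, Set.mem_ofPred_eq, W]
        exact ⟨⟨_, hes, Sym2.mem_mk_left u v⟩, ⟨_, hes, Sym2.mem_mk_right u v⟩, heG⟩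
    calc #s = #(s.image Subtype.val) := (card_image_of_injective _ Subtype.val_injective).symm
      _ ≤ ∑ v ∈ W, k v := by
        have := (card_le_card hs).trans (hk _)
        rwa [SimpleGraph.Subgraph.induce_verts, Set.toFinite_toFinset, toFinset_coe] at this
      _ = #(s.biUnion slots) := by rw [hslots, card_filter_sigma_fst_mem]
  obtain ⟨f, hf, hfslots⟩ := (all_card_le_biUnion_card_iff_exists_injective slots).1 hall
  refine ⟨fun e => (f e).1, fun e => by simpa [slots] using hfslots e, fun v => ?_⟩
  calc #{e | (f e).1 = v} ≤ #{x : Σ v, Fin (k v) | x.1 ∈ ({v} : Finset V)} :=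
        card_le_card_of_injOn f (fun e he => by simpa using he) hf.injOn
    _ = k v := by rw [card_filter_sigma_fst_mem, sum_singleton]

end Orientation

section Noncrossing

variable {V : Type*} {G : SimpleGraph V} {p : V → ℕ}

def IsNoncrossing (G : SimpleGraph V) (p : V → ℕ) : Prop :=
  ∀ a b c d, G.Adj a b → G.Adj c d → ¬(p a < p c ∧ p c < p b ∧ p b < p d)

def chords (G : SimpleGraph V) [DecidableRel G.Adj] (p : V → ℕ) (S : Finset V) :
    Finset (V × V) :=
  {e ∈ S ×ˢ S | G.Adj e.1 e.2 ∧ p e.1 < p e.2}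

def IsEmptyChord (p : V → ℕ) (S : Finset V) (e : V × V) : Prop :=
  ∀ z ∈ S, ¬(p e.1 < p z ∧ p z < p e.2)

variable [DecidableRel G.Adj] {S : Finset V}

lemma mem_chords {e : V × V} :
    e ∈ chords G p S ↔ (e.1 ∈ S ∧ e.2 ∈ S) ∧ G.Adj e.1 e.2 ∧ p e.1 < p e.2 := by
  simp [chords]

lemma eq_of_snd_eq_of_isEmptyChord (hp : Function.Injective p) {e f : V × V}
    (he : e ∈ chords G p S) (hf : f ∈ chords G p S)
    (he' : IsEmptyChord p S e) (hf' : IsEmptyChord p S f) (h : e.2 = f.2) : e = f := by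
  rw [mem_chords] at he hf
  rcases lt_trichotomy (p e.1) (p f.1) with hlt | heq | hgt
  · exact absurd ⟨hlt, h ▸ hf.2.2⟩ (he' f.1 hf.1.1)
  · exact Prod.ext (hp heq) h
  · exact absurd ⟨hgt, h ▸ he.2.2⟩ (hf' e.1 he.1.1)

lemma eq_of_fst_eq_of_isEmptyChord (hp : Function.Injective p) {e f : V × V}
    (he : e ∈ chords G p S) (hf : f ∈ chords G p S)
    (he' : IsEmptyChord p S e) (hf' : IsEmptyChord p S f) (h : e.1 = f.1) : e = f := by
  rw [mem_chords] at he hf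
  rcases lt_trichotomy (p e.2) (p f.2) with hlt | heq | hgt
  · exact absurd ⟨h ▸ he.2.2, hlt⟩ (hf' e.2 he.1.2)
  · exact Prod.ext h (hp heq)
  · exact absurd ⟨h ▸ hf.2.2, hgt⟩ (he' f.2 hf.1.2)

lemma card_filter_chords_incident_le_two [DecidableEq V] (hp : Function.Injective p) {c : V}
    (hc : ∀ e ∈ chords G p S, (e.1 = c ∨ e.2 = c) → IsEmptyChord p S e) :
    #{e ∈ chords G p S | e.1 = c ∨ e.2 = c} ≤ 2 := by
  have hfst : #{e ∈ chords G p S | e.1 = c} ≤ 1 := card_le_one.2 fun e he f hf => by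
    rw [mem_filter] at he hf
    exact eq_of_fst_eq_of_isEmptyChord hp he.1 hf.1 (hc e he.1 (.inl he.2))
      (hc f hf.1 (.inl hf.2)) (he.2.trans hf.2.symm)
  have hsnd : #{e ∈ chords G p S | e.2 = c} ≤ 1 := card_le_one.2 fun e he f hf => by
    rw [mem_filter] at he hf
    exact eq_of_snd_eq_of_isEmptyChord hp he.1 hf.1 (hc e he.1 (.inr he.2))
      (hc f hf.1 (.inr hf.2)) (he.2.trans hf.2.symm)
  rw [filter_or]
  exact (card_union_le _ _).trans (by omega)

lemma IsNoncrossing.exists_mem_forall_incident_isEmptyChord (hcross : IsNoncrossing G p)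
    (hS : S.Nonempty) :
    ∃ c ∈ S, ∀ e ∈ chords G p S, (e.1 = c ∨ e.2 = c) → IsEmptyChord p S e := by
  classical
  rcases ({e ∈ chords G p S | ¬IsEmptyChord p S e}).eq_empty_or_nonempty with hL | hL
  · obtain ⟨c, hc⟩ := hS
    refine ⟨c, hc, fun e he _ => ?_⟩
    by_contra h
    exact eq_empty_iff_forall_notMem.1 hL e (mem_filter.2 ⟨he, h⟩)
  obtain ⟨a, ha, hmin⟩ := exists_min_image _ (fun e : V × V => p e.2 - p e.1) hL
  obtain ⟨ha, hlong⟩ := mem_filter.1 ha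
  simp only [IsEmptyChord, not_forall, not_not] at hlong
  obtain ⟨c, hc, hac, hcb⟩ := hlong
  refine ⟨c, hc, fun e he hec => ?_⟩
  by_contra hlong
  have hshorter := hmin e (mem_filter.2 ⟨he, hlong⟩)
  rw [mem_chords] at ha he
  rcases hec with rfl | rfl
  · have : p e.2 ≤ p a.2 := not_lt.1 fun h => hcross a.1 a.2 e.1 e.2 ha.2.1 he.2.1 ⟨hac, hcb, h⟩
    omega
  · have : p a.1 ≤ p e.1 := not_lt.1 fun h => hcross e.1 e.2 a.1 a.2 he.2.1 ha.2.1 ⟨h, hac, hcb⟩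
    omega

theorem IsNoncrossing.card_chords_le [DecidableEq V] (hp : Function.Injective p)
    (hcross : IsNoncrossing G p) (S : Finset V) : #(chords G p S) ≤ 2 * #S := by
  induction S using Finset.strongInduction with
  | H S ih =>
  rcases S.eq_empty_or_nonempty with rfl | hS
  · simp [chords]
  obtain ⟨c, hc, hshort⟩ := hcross.exists_mem_forall_incident_isEmptyChord hS
  have hrest : {e ∈ chords G p S | ¬(e.1 = c ∨ e.2 = c)} ⊆ chords G p (S.erase c) := by
    intro e he
    simp only [mem_filter, mem_chords, not_or] at he
    simp only [mem_chords, mem_erase]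
    exact ⟨⟨⟨he.2.1, he.1.1.1⟩, he.2.2, he.1.1.2⟩, he.1.2⟩
  have hat := card_filter_chords_incident_le_two hp hshort
  have hih := (card_le_card hrest).trans (ih _ (erase_ssubset hc))
  have hcard := card_erase_of_mem hc
  have hpos := card_pos.2 hS
  rw [← card_filter_add_card_filter_not (fun e : V × V => e.1 = c ∨ e.2 = c)]
  omega

end Noncrossing

theorem Outerplanar.card_edgeSet_le {V : Type*} [Finite V] {G : SimpleGraph V}
    (hG : Outerplanar G) (H : G.Subgraph) :
    #H.edgeSet.toFinite.toFinset ≤ 2 * #H.verts.toFinite.toFinset := by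
  classical
  obtain ⟨p, hp, hcross⟩ := hG
  refine le_trans (card_le_card ?_) ((card_image_le (f := fun e : V × V => s(e.1, e.2))).trans
    (IsNoncrossing.card_chords_le hp hcross _))
  intro e he
  induction e with
  | h u v =>
    have huv : H.Adj u v := by simpa using he
    have hG := H.adj_sub huv
    simp only [mem_image, mem_chords, Set.Finite.mem_toFinset]
    rcases (hp.ne hG.ne).lt_or_gt with hlt | hgt
    · exact ⟨(u, v), ⟨⟨huv.fst_mem, huv.snd_mem⟩, hG, hlt⟩, rfl⟩
    · exact ⟨(v, u), ⟨⟨huv.snd_mem, huv.fst_mem⟩, hG.symm, hgt⟩, Sym2.eq_swap⟩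

theorem exists_isOrientation_outDeg_le_iff (G : SimpleGraph V) (k : V → ℕ) :
    (∃ D : Finset (V × V), IsOrientation G D ∧ ∀ v, outDeg D v ≤ k v) ↔
      ∀ H : G.Subgraph, #H.edgeSet.toFinite.toFinset ≤ ∑ v ∈ H.verts.toFinite.toFinset, k v := by
  classical
  refine ⟨fun ⟨D, hD, hk⟩ H => (hD.card_edgeSet_le H).trans (sum_le_sum fun v _ => hk v),
    fun hk => ?_⟩
  obtain ⟨tail, htail, hk⟩ := exists_tail_of_card_edgeSet_le k hk
  obtain ⟨D, hD, hout⟩ := exists_isOrientation_of_tail tail htail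
  exact ⟨D, hD, fun v => (hout v).trans (hk v)⟩

theorem stmt15 (G : SimpleGraph V) (k : V → ℕ) :
    ((∃ D : Finset (V × V), IsOrientation G D ∧ ∀ v, outDeg D v ≤ k v) ↔
      ∀ H : G.Subgraph, H.edgeSet.toFinite.toFinset.card ≤
        ∑ v ∈ H.verts.toFinite.toFinset, k v) ∧
    (Outerplanar G → ∃ D : Finset (V × V), IsOrientation G D ∧ ∀ v, outDeg D v ≤ 2) :=
  ⟨exists_isOrientation_outDeg_le_iff G k, fun hG =>
    (exists_isOrientation_outDeg_le_iff G fun _ => 2).2 fun H => by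
      simpa [mul_comm] using hG.card_edgeSet_le H⟩
end

section
/- Let D' be an orientation of a graph G' and let D be obtained by adding a directed path v_1 → v_2 → ... → v_s (s ≥ 3) of new vertices v_2, ..., v_{s−1} between existing vertices v_1 and v_s, where v_1v_s is not necessarily an edge. If the new path together with D' creates directed cycles, each new Eulerian subdigraph of D contains the entire new path; and if there is no directed path from v_s to v_1 in D', then D has exactly the same Eulerian subdigraphs as D'. -/
variable {V : Type*} [Fintype V] [DecidableEq V]

/-!
An internal vertex of the new path meets no arc of `D'`, so in `D` it has exactly one in-arc
and one out-arc, both on the path; an Eulerian subdigraph therefore contains either both or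
neither, and this propagates along the path. If an Eulerian `H` contains the whole path, then
`H` minus the path is an arc set of `D'` that is balanced everywhere except for one surplus
out-arc at `vs` and one surplus in-arc at `v1`; counting arcs leaving the set of vertices
reachable from `vs` shows that `v1` is reachable from `vs` in `D'`.
-/

open Finset in
theorem Finset.card_filter_sdiff_add_card_filter {β : Type*} [DecidableEq β] {P H : Finset β}
    (h : P ⊆ H) (p : β → Prop) [DecidablePred p] :
    #((H \ P).filter p) + #(P.filter p) = #(H.filter p) := by
  conv_rhs => rw [← sdiff_union_of_subset h]
  rw [filter_union, card_union_of_disjoint (disjoint_filter_filter sdiff_disjoint)]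

theorem exists_isChain_of_reflTransGen {α : Type*} {r : α → α → Prop} {a b : α}
    (h : Relation.ReflTransGen r a b) (hab : a ≠ b) :
    ∃ m, List.IsChain r (a :: (m ++ [b])) := by
  obtain ⟨l, hl, hlast⟩ := List.exists_isChain_cons_of_relationReflTransGen h
  have hl0 : l ≠ [] := by
    rintro rfl
    exact hab hlast
  rw [List.getLast_cons hl0] at hlast
  subst hlast
  exact ⟨l.dropLast, by rwa [List.dropLast_append_getLast]⟩

section

variable {α : Type*} [DecidableEq α]

open Finset

theorem mem_eulerianSubs [Fintype α] {D H : Finset (α × α)} :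
    H ∈ eulerianSubs D ↔ H ⊆ D ∧ IsEulerian H := by
  rw [eulerianSubs, mem_filter, mem_powerset]

theorem mem_pathArcs_iff {L : List α} {a b : α} :
    (a, b) ∈ pathArcs L ↔ ∃ i, ∃ h : i + 1 < L.length, L[i] = a ∧ L[i + 1] = b := by
  simp only [pathArcs, List.mem_toFinset, List.mem_iff_getElem, List.getElem_zip,
    List.getElem_tail, List.length_zip, List.length_tail, Prod.mk.injEq]
  constructor
  · rintro ⟨i, hi, h⟩; exact ⟨i, by omega, h⟩
  · rintro ⟨i, hi, h⟩; exact ⟨i, by omega, h⟩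

theorem pathArcs_cons_cons (u w : α) (r : List α) :
    pathArcs (u :: w :: r) = insert (u, w) (pathArcs (w :: r)) := by
  simp [pathArcs]

theorem fst_mem_dropLast_of_mem_pathArcs {L : List α} {a b : α} (h : (a, b) ∈ pathArcs L) :
    a ∈ L.dropLast := by
  obtain ⟨i, hi, rfl, -⟩ := mem_pathArcs_iff.1 h
  exact List.mem_iff_getElem.2 ⟨i, by simp; omega, List.getElem_dropLast _⟩

theorem snd_mem_tail_of_mem_pathArcs {L : List α} {a b : α} (h : (a, b) ∈ pathArcs L) :
    b ∈ L.tail := by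
  obtain ⟨i, hi, -, rfl⟩ := mem_pathArcs_iff.1 h
  exact List.mem_iff_getElem.2 ⟨i, by simp; omega, List.getElem_tail _⟩

theorem exists_mem_pathArcs_of_mem_dropLast {L : List α} {a : α} (h : a ∈ L.dropLast) :
    ∃ b, (a, b) ∈ pathArcs L := by
  obtain ⟨i, hi, rfl⟩ := List.mem_iff_getElem.1 h
  simp only [List.length_dropLast] at hi
  exact ⟨L[i + 1], mem_pathArcs_iff.2 ⟨i, by omega, (List.getElem_dropLast _).symm, rfl⟩⟩

theorem exists_mem_pathArcs_of_mem_tail {L : List α} {b : α} (h : b ∈ L.tail) :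
    ∃ a, (a, b) ∈ pathArcs L := by
  obtain ⟨i, hi, rfl⟩ := List.mem_iff_getElem.1 h
  simp only [List.length_tail] at hi
  exact ⟨L[i], mem_pathArcs_iff.2 ⟨i, by omega, rfl, (List.getElem_tail _).symm⟩⟩

theorem List.Nodup.eq_of_mem_pathArcs_left {L : List α} (hL : L.Nodup) {a b c : α}
    (hb : (a, b) ∈ pathArcs L) (hc : (a, c) ∈ pathArcs L) : b = c := by
  obtain ⟨i, hi, rfl, rfl⟩ := mem_pathArcs_iff.1 hb
  obtain ⟨j, hj, hij, rfl⟩ := mem_pathArcs_iff.1 hc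
  obtain rfl : j = i := hL.getElem_inj_iff.1 hij
  rfl

theorem List.Nodup.eq_of_mem_pathArcs_right {L : List α} (hL : L.Nodup) {a b c : α}
    (ha : (a, c) ∈ pathArcs L) (hb : (b, c) ∈ pathArcs L) : a = b := by
  obtain ⟨i, hi, rfl, rfl⟩ := mem_pathArcs_iff.1 ha
  obtain ⟨j, hj, rfl, hij⟩ := mem_pathArcs_iff.1 hb
  obtain rfl : j = i := by simpa using hL.getElem_inj_iff.1 hij
  rfl

theorem outDeg_sdiff_add_outDeg {P H : Finset (α × α)} (h : P ⊆ H) (v : α) :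
    outDeg (H \ P) v + outDeg P v = outDeg H v :=
  card_filter_sdiff_add_card_filter h _

theorem inDeg_sdiff_add_inDeg {P H : Finset (α × α)} (h : P ⊆ H) (v : α) :
    inDeg (H \ P) v + inDeg P v = inDeg H v :=
  card_filter_sdiff_add_card_filter h _

theorem outDeg_pathArcs {L : List α} (hL : L.Nodup) (v : α) :
    outDeg (pathArcs L) v = if v ∈ L.dropLast then 1 else 0 := by
  split_ifs with hv
  · obtain ⟨b, hb⟩ := exists_mem_pathArcs_of_mem_dropLast hv
    refine le_antisymm (card_le_one.2 ?_) (card_pos.2 ⟨_, mem_filter.2 ⟨hb, rfl⟩⟩)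
    rintro ⟨a, c⟩ hc ⟨a', c'⟩ hc'
    simp only [mem_filter] at hc hc'
    obtain ⟨hc, rfl⟩ := hc
    obtain ⟨hc', rfl⟩ := hc'
    rw [hL.eq_of_mem_pathArcs_left hc hc']
  · refine card_eq_zero.2 (filter_eq_empty_iff.2 ?_)
    rintro ⟨a, b⟩ h rfl
    exact hv (fst_mem_dropLast_of_mem_pathArcs h)

theorem inDeg_pathArcs {L : List α} (hL : L.Nodup) (v : α) :
    inDeg (pathArcs L) v = if v ∈ L.tail then 1 else 0 := by
  split_ifs with hv
  · obtain ⟨a, ha⟩ := exists_mem_pathArcs_of_mem_tail hv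
    refine le_antisymm (card_le_one.2 ?_) (card_pos.2 ⟨_, mem_filter.2 ⟨ha, rfl⟩⟩)
    rintro ⟨a, c⟩ hc ⟨a', c'⟩ hc'
    simp only [mem_filter] at hc hc'
    obtain ⟨hc, rfl⟩ := hc
    obtain ⟨hc', rfl⟩ := hc'
    rw [hL.eq_of_mem_pathArcs_right hc hc']
  · refine card_eq_zero.2 (filter_eq_empty_iff.2 ?_)
    rintro ⟨a, b⟩ h rfl
    exact hv (snd_mem_tail_of_mem_pathArcs h)

theorem mem_iff_mem_of_isEulerian {H : Finset (α × α)} (hH : IsEulerian H) {x y z : α}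
    (hin : ∀ a ∈ H, a.2 = y → a = (x, y)) (hout : ∀ a ∈ H, a.1 = y → a = (y, z)) :
    (x, y) ∈ H ↔ (y, z) ∈ H := by
  have hx : (x, y) ∈ H ↔ 0 < inDeg H y := by
    rw [inDeg, card_pos, filter_nonempty_iff]
    exact ⟨fun h => ⟨_, h, rfl⟩, fun ⟨a, ha, hay⟩ => hin a ha hay ▸ ha⟩
  have hz : (y, z) ∈ H ↔ 0 < outDeg H y := by
    rw [outDeg, card_pos, filter_nonempty_iff]
    exact ⟨fun h => ⟨_, h, rfl⟩, fun ⟨a, ha, hay⟩ => hout a ha hay ▸ ha⟩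
  rw [hx, hz, hH y]

theorem mem_iff_mem_of_mem_pathArcs {L : List α} {H : Finset (α × α)}
    (hH : ∀ x y z, (x, y) ∈ pathArcs L → (y, z) ∈ pathArcs L → ((x, y) ∈ H ↔ (y, z) ∈ H))
    {e f : α × α} (he : e ∈ pathArcs L) (hf : f ∈ pathArcs L) : e ∈ H ↔ f ∈ H := by
  suffices key : ∀ u w r, pathArcs (u :: w :: r) ⊆ pathArcs L →
      ∀ e ∈ pathArcs (u :: w :: r), e ∈ H ↔ (u, w) ∈ H by
    obtain ⟨u, w, r, rfl⟩ : ∃ u w r, L = u :: w :: r := by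
      match L, he with
      | u :: w :: r, _ => exact ⟨u, w, r, rfl⟩
    exact (key u w r subset_rfl e he).trans (key u w r subset_rfl f hf).symm
  intro u w r
  induction r generalizing u w with
  | nil => simp [pathArcs]
  | cons z r ih =>
    intro hsub e he
    rw [pathArcs_cons_cons] at hsub he
    rw [insert_subset_iff] at hsub
    rcases mem_insert.1 he with rfl | he
    · rfl
    · rw [ih w z hsub.2 e he]
      exact (hH u w z hsub.1 (hsub.2 (by simp [pathArcs_cons_cons]))).symm

theorem reflTransGen_of_inDeg_lt_outDeg [Fintype α] {K : Finset (α × α)} {s t : α}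
    (hbal : ∀ v, v ≠ s → v ≠ t → outDeg K v = inDeg K v) (hs : inDeg K s < outDeg K s) :
    Relation.ReflTransGen (fun x y => (x, y) ∈ K) s t := by
  classical
  by_contra ht
  set S := univ.filter (Relation.ReflTransGen (fun x y => (x, y) ∈ K) s)
  have hclosed : K.filter (fun a => a.1 ∈ S) ⊆ K.filter (fun a => a.2 ∈ S) := by
    intro a ha
    simp only [S, mem_filter, mem_univ, true_and] at ha ⊢
    exact ⟨ha.1, ha.2.tail ha.1⟩
  have hle : ∑ v ∈ S, outDeg K v ≤ ∑ v ∈ S, inDeg K v := by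
    simp only [outDeg, inDeg, sum_card_fiberwise_eq_card_filter]
    exact card_le_card hclosed
  have hlt : ∑ v ∈ S, inDeg K v < ∑ v ∈ S, outDeg K v := by
    refine sum_lt_sum (fun v hv => ?_) ⟨s, by simp [S, Relation.ReflTransGen.refl], hs⟩
    by_cases hvs : v = s
    · exact hvs ▸ hs.le
    · refine (hbal v hvs ?_).ge
      rintro rfl
      exact ht (mem_filter.1 hv).2
  exact hlt.not_ge hle

/-- For nodup `L`, the vertices in both `L.tail` and `L.dropLast` are the interior ones. -/
theorem pathArcs_subset_of_isEulerian {D' H : Finset (α × α)} {L : List α} (hL : L.Nodup)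
    (hD' : ∀ a ∈ D', ∀ y ∈ L.tail, y ∈ L.dropLast → a.1 ≠ y ∧ a.2 ≠ y)
    (hH : IsEulerian H) (hHD : H ⊆ D' ∪ pathArcs L) {e : α × α} (he : e ∈ pathArcs L)
    (heH : e ∈ H) : pathArcs L ⊆ H := by
  refine fun f hf => (mem_iff_mem_of_mem_pathArcs ?_ he hf).1 heH
  intro x y z hxy hyz
  have hP : ∀ a ∈ H, (a.1 = y ∨ a.2 = y) → a ∈ pathArcs L := by
    intro a ha hay
    refine (mem_union.1 (hHD ha)).resolve_left fun haD' => ?_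
    have hy := hD' a haD' y (snd_mem_tail_of_mem_pathArcs hxy)
      (fst_mem_dropLast_of_mem_pathArcs hyz)
    tauto
  apply mem_iff_mem_of_isEulerian hH
  · rintro ⟨a, b⟩ ha rfl
    rw [hL.eq_of_mem_pathArcs_right (hP _ ha (Or.inr rfl)) hxy]
  · rintro ⟨a, b⟩ ha rfl
    rw [hL.eq_of_mem_pathArcs_left (hP _ ha (Or.inl rfl)) hyz]

theorem reflTransGen_of_pathArcs_subset [Fintype α] {D' H : Finset (α × α)} {u w : α}
    {m : List α} (hL : (u :: (m ++ [w])).Nodup) (hH : IsEulerian H)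
    (hHD : H ⊆ D' ∪ pathArcs (u :: (m ++ [w]))) (hPH : pathArcs (u :: (m ++ [w])) ⊆ H) :
    Relation.ReflTransGen (fun x y => (x, y) ∈ D') w u := by
  set P := pathArcs (u :: (m ++ [w]))
  have hKD' : H \ P ⊆ D' := sdiff_le_iff'.2 hHD
  have hdeg : ∀ v, outDeg (H \ P) v + (if v ∈ u :: m then 1 else 0) =
      inDeg (H \ P) v + (if v ∈ m ++ [w] then 1 else 0) := by
    intro v
    have hdrop : (u :: (m ++ [w])).dropLast = u :: m := by
      rw [← List.cons_append, List.dropLast_concat]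
    have h := hH v
    rwa [← outDeg_sdiff_add_outDeg hPH, ← inDeg_sdiff_add_inDeg hPH, outDeg_pathArcs hL,
      inDeg_pathArcs hL, hdrop, List.tail_cons] at h
  refine Relation.ReflTransGen.mono (fun x y h => hKD' h) w u
    (reflTransGen_of_inDeg_lt_outDeg (K := H \ P) (fun v hvw hvu => ?_) ?_)
  · have h := hdeg v
    simp only [List.mem_cons, List.mem_append, List.not_mem_nil, hvw, hvu, false_or,
      or_false] at h
    omega
  · have hw : w ∉ u :: m := by
      simp only [List.nodup_cons, List.mem_append, List.mem_singleton, List.nodup_append] at hL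
      simp only [List.mem_cons, not_or]
      exact ⟨fun h => hL.1 (Or.inr h.symm), fun h => hL.2.2.2 w h w rfl rfl⟩
    have h := hdeg w
    simp only [hw, if_false, List.mem_append, List.mem_singleton, or_true, if_true] at h
    omega

end

theorem stmt16_general (D' : Finset (V × V)) (v1 vs : V) (hne : v1 ≠ vs)
    (l : List V) (hnodup : l.Nodup) (hv1 : v1 ∉ l) (hvs : vs ∉ l)
    (hfresh : ∀ x ∈ l, ∀ a ∈ D', a.1 ≠ x ∧ a.2 ≠ x)
    (D : Finset (V × V)) (hD : D = D' ∪ pathArcs (v1 :: (l ++ [vs]))) :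
    (∀ H ∈ eulerianSubs D, (∃ e ∈ H, e ∉ D') → pathArcs (v1 :: (l ++ [vs])) ⊆ H) ∧
    ((¬ ∃ m : List V, List.Chain (fun x y => (x, y) ∈ D') vs (m ++ [v1])) →
      eulerianSubs D = eulerianSubs D') := by
  subst hD
  have hL : (v1 :: (l ++ [vs])).Nodup := by
    simp only [List.nodup_cons, List.nodup_append, List.mem_append, List.mem_singleton]
    grind
  have hpath : ∀ H ∈ eulerianSubs (D' ∪ pathArcs (v1 :: (l ++ [vs]))), (∃ e ∈ H, e ∉ D') →
      pathArcs (v1 :: (l ++ [vs])) ⊆ H := by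
    rintro H hH ⟨e, heH, heD'⟩
    obtain ⟨hHD, hE⟩ := mem_eulerianSubs.1 hH
    refine pathArcs_subset_of_isEulerian hL (fun a ha y hy_tail hy_drop => ?_) hE hHD
      ((Finset.mem_union.1 (hHD heH)).resolve_left heD') heH
    simp only [List.tail_cons, List.mem_append, List.mem_singleton] at hy_tail
    rw [← List.cons_append, List.dropLast_concat, List.mem_cons] at hy_drop
    exact hfresh y (by grind) a ha
  refine ⟨hpath, fun hno => Finset.ext fun H => ?_⟩
  simp only [mem_eulerianSubs]
  refine ⟨fun ⟨hHD, hE⟩ => ⟨?_, hE⟩,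
    fun ⟨hHD', hE⟩ => ⟨hHD'.trans Finset.subset_union_left, hE⟩⟩
  by_contra hsub
  obtain ⟨e, heH, heD'⟩ := Finset.not_subset.1 hsub
  have hPH := hpath H (mem_eulerianSubs.2 ⟨hHD, hE⟩) ⟨e, heH, heD'⟩
  exact hno (exists_isChain_of_reflTransGen
    (reflTransGen_of_pathArcs_subset hL hE hHD hPH) hne.symm)

theorem stmt16 (D' : Finset (V × V)) (v1 vs : V) (hne : v1 ≠ vs)
    (l : List V) (hl : l ≠ []) (hnodup : l.Nodup) (hv1 : v1 ∉ l) (hvs : vs ∉ l)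
    (hfresh : ∀ x ∈ l, ∀ a ∈ D', a.1 ≠ x ∧ a.2 ≠ x)
    (D : Finset (V × V)) (hD : D = D' ∪ pathArcs (v1 :: (l ++ [vs]))) :
    (∀ H ∈ eulerianSubs D, (∃ e ∈ H, e ∉ D') → pathArcs (v1 :: (l ++ [vs])) ⊆ H) ∧
    ((¬ ∃ m : List V, List.Chain (fun x y => (x, y) ∈ D') vs (m ++ [v1])) →
      eulerianSubs D = eulerianSubs D') :=
  stmt16_general D' v1 vs hne l hnodup hv1 hvs hfresh D hD
end
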